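/- arXiv:cond-mat/9808046 — 3 statements merged into one kernel-verified Lean document; each statement's English description precedes it below -/
import Mathlib

section
/- The following chain of inequalities holds: 1 ≥ Re( (h/N) Σ_{i,j=1}^N (L + hI + iα)^{-1}_{ij} ) ≥ Re( (h²/N) Σ_{i,j=1}^N (L + hI + iα)^{-2}_{ij} ). -/
open Matrix BigOperators

/-!
Write `M = L + hI + iα` and `w = M⁻¹ 1`, so that `Σᵢⱼ M⁻¹ᵢⱼ = Σᵢ wᵢ` and, `M` being complex
symmetric, `Σᵢⱼ M⁻²ᵢⱼ = Σᵢ wᵢ²`. Since `L` is positive semidefinite and `iα` contributes only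
imaginary terms, `Re ⟨x, Mx⟩ ≥ h ‖x‖²`; at `x = w` this reads `a ≥ h s` with `a = Re Σᵢ wᵢ` and
`s = ‖w‖²`. Cauchy–Schwarz gives `a² ≤ N s ≤ N a / h`, i.e. `h a ≤ N`, the first inequality, and
`Re Σᵢ wᵢ² ≤ s ≤ a / h` is the second.
-/

namespace Matrix

theorem transpose_map_ofReal_add_smul_one_add_I_smul_diagonal {n : Type*} [DecidableEq n]
    {L : Matrix n n ℝ} (hL : L.IsSymm) (h : ℝ) (α : n → ℝ) :
    (L.map ((↑) : ℝ → ℂ) + (h : ℂ) • 1 + Complex.I • diagonal fun i => (α i : ℂ))ᵀ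
      = L.map (↑) + (h : ℂ) • 1 + Complex.I • diagonal fun i => (α i : ℂ) := by
  rw [transpose_add, transpose_add, ← transpose_map, hL.eq, transpose_smul, transpose_one,
    transpose_smul, diagonal_transpose]

variable {n : Type*} [Fintype n]

theorem sum_sum_eq_one_dotProduct_mulVec_one {R : Type*} [NonAssocSemiring R]
    (A : Matrix n n R) : ∑ i, ∑ j, A i j = 1 ⬝ᵥ (A *ᵥ 1) := by
  simp [one_dotProduct, mulVec, dotProduct_one]

theorem sum_sum_mul_self_of_transpose_eq {R : Type*} [CommSemiring R] {A : Matrix n n R}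
    (hA : Aᵀ = A) : ∑ i, ∑ j, (A * A) i j = (A *ᵥ 1) ⬝ᵥ (A *ᵥ 1) := by
  rw [sum_sum_eq_one_dotProduct_mulVec_one, ← mulVec_mulVec, dotProduct_mulVec,
    ← mulVec_transpose, hA]

theorem re_one_dotProduct_sq_le (v : n → ℂ) :
    (1 ⬝ᵥ v).re ^ 2 ≤ Fintype.card n * (star v ⬝ᵥ v).re := by
  have hnormSq : (star v ⬝ᵥ v).re = ∑ i, Complex.normSq (v i) := by
    simp [dotProduct, Complex.re_sum, Complex.normSq_apply]
  calc (1 ⬝ᵥ v).re ^ 2 = (∑ i, (v i).re) ^ 2 := by rw [one_dotProduct, Complex.re_sum]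
    _ ≤ Fintype.card n * ∑ i, (v i).re ^ 2 := sq_sum_le_card_mul_sum_sq
    _ ≤ Fintype.card n * (star v ⬝ᵥ v).re := by
      rw [hnormSq]
      gcongr with i
      exact (sq _).trans_le (Complex.re_sq_le_normSq _)

theorem re_dotProduct_self_le (v : n → ℂ) : (v ⬝ᵥ v).re ≤ (star v ⬝ᵥ v).re := by
  simp only [dotProduct, Complex.re_sum, Pi.star_apply, Complex.star_def, Complex.mul_re,
    Complex.conj_re, Complex.conj_im]
  refine Finset.sum_le_sum fun i _ => ?_
  nlinarith [sq_nonneg (v i).im]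

theorem re_star_dotProduct_map_ofReal_mulVec (L : Matrix n n ℝ) (x : n → ℂ) :
    (star x ⬝ᵥ (L.map (↑) *ᵥ x)).re
      = (fun i => (x i).re) ⬝ᵥ (L *ᵥ fun i => (x i).re)
        + (fun i => (x i).im) ⬝ᵥ (L *ᵥ fun i => (x i).im) := by
  simp only [dotProduct, mulVec, Pi.star_apply, Complex.re_sum, Finset.mul_sum, map_apply,
    ← Finset.sum_add_distrib]
  refine Finset.sum_congr rfl fun i _ => Finset.sum_congr rfl fun j _ => ?_
  simp only [Complex.mul_re, Complex.mul_im, Complex.star_def, Complex.conj_re, Complex.conj_im,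
    Complex.ofReal_re, Complex.ofReal_im]
  ring

theorem PosSemidef.re_star_dotProduct_map_ofReal_mulVec_nonneg {L : Matrix n n ℝ}
    (hL : L.PosSemidef) (x : n → ℂ) : 0 ≤ (star x ⬝ᵥ (L.map (↑) *ᵥ x)).re := by
  rw [re_star_dotProduct_map_ofReal_mulVec]
  exact add_nonneg (by simpa using hL.dotProduct_mulVec_nonneg _)
    (by simpa using hL.dotProduct_mulVec_nonneg _)

variable [DecidableEq n]

theorem re_star_dotProduct_I_smul_diagonal_mulVec (α : n → ℝ) (x : n → ℂ) :
    (star x ⬝ᵥ ((Complex.I • diagonal fun i => (α i : ℂ)) *ᵥ x)).re = 0 := by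
  rw [smul_mulVec, dotProduct_smul, smul_eq_mul, Complex.I_mul_re, neg_eq_zero]
  simp only [dotProduct, mulVec_diagonal, Pi.star_apply, Complex.im_sum]
  refine Finset.sum_eq_zero fun i _ => ?_
  simp only [Complex.mul_im, Complex.mul_re, Complex.star_def, Complex.conj_re, Complex.conj_im,
    Complex.ofReal_re, Complex.ofReal_im]
  ring

theorem PosSemidef.coercive_map_ofReal_add_smul_one_add_I_smul_diagonal {L : Matrix n n ℝ}
    (hL : L.PosSemidef) (h : ℝ) (α : n → ℝ) (x : n → ℂ) :
    h * (star x ⬝ᵥ x).re ≤ (star x ⬝ᵥ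
      ((L.map (↑) + (h : ℂ) • 1 + Complex.I • diagonal fun i => (α i : ℂ)) *ᵥ x)).re := by
  have hL := hL.re_star_dotProduct_map_ofReal_mulVec_nonneg x
  have hα := re_star_dotProduct_I_smul_diagonal_mulVec α x
  simp only [add_mulVec, dotProduct_add, Complex.add_re, smul_mulVec, one_mulVec,
    dotProduct_smul, smul_eq_mul, Complex.re_ofReal_mul] at hα ⊢
  linarith

section Coercive

variable {M : Matrix n n ℂ} {h : ℝ}

open ComplexOrder in
theorem isUnit_det_of_coercive (hh : 0 < h)
    (hM : ∀ x, h * (star x ⬝ᵥ x).re ≤ (star x ⬝ᵥ (M *ᵥ x)).re) : IsUnit M.det := by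
  rw [isUnit_iff_ne_zero]
  intro hdet
  obtain ⟨v, hv0, hMv⟩ := exists_mulVec_eq_zero_iff.mpr hdet
  have hpos : 0 < (star v ⬝ᵥ v).re :=
    (Complex.lt_def.mp (dotProduct_star_self_pos_iff.mpr hv0)).1
  have := hM v
  rw [hMv, dotProduct_zero, Complex.zero_re] at this
  nlinarith

theorem coercive_mul_re_star_dotProduct_le (hh : 0 < h)
    (hM : ∀ x, h * (star x ⬝ᵥ x).re ≤ (star x ⬝ᵥ (M *ᵥ x)).re) :
    h * (star (M⁻¹ *ᵥ 1) ⬝ᵥ (M⁻¹ *ᵥ 1)).re ≤ (1 ⬝ᵥ (M⁻¹ *ᵥ 1)).re := by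
  have hMw : M *ᵥ (M⁻¹ *ᵥ 1) = 1 := by
    rw [mulVec_mulVec, mul_nonsing_inv _ (isUnit_det_of_coercive hh hM), one_mulVec]
  have hre : (star (M⁻¹ *ᵥ 1) ⬝ᵥ 1).re = (1 ⬝ᵥ (M⁻¹ *ᵥ 1)).re := by
    simp [dotProduct_one, one_dotProduct, Complex.re_sum]
  simpa [hMw, hre] using hM (M⁻¹ *ᵥ 1)

theorem mul_re_sum_inv_le_card (hh : 0 < h)
    (hM : ∀ x, h * (star x ⬝ᵥ x).re ≤ (star x ⬝ᵥ (M *ᵥ x)).re) :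
    h * (∑ i, ∑ j, M⁻¹ i j).re ≤ Fintype.card n := by
  have hs := coercive_mul_re_star_dotProduct_le hh hM
  have hCS := re_one_dotProduct_sq_le (M⁻¹ *ᵥ 1)
  rw [sum_sum_eq_one_dotProduct_mulVec_one]
  set a := (1 ⬝ᵥ (M⁻¹ *ᵥ 1)).re
  set s := (star (M⁻¹ *ᵥ 1) ⬝ᵥ (M⁻¹ *ᵥ 1)).re
  have hN : (0 : ℝ) ≤ Fintype.card n := Nat.cast_nonneg _
  rcases le_or_gt a 0 with ha | ha
  · nlinarith
  · refine le_of_mul_le_mul_right ?_ ha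
    nlinarith [mul_le_mul_of_nonneg_left hs hN, mul_le_mul_of_nonneg_left hCS hh.le]

theorem sq_mul_re_sum_inv_mul_inv_le (hh : 0 < h)
    (hM : ∀ x, h * (star x ⬝ᵥ x).re ≤ (star x ⬝ᵥ (M *ᵥ x)).re) (hMt : Mᵀ = M) :
    h ^ 2 * (∑ i, ∑ j, (M⁻¹ * M⁻¹) i j).re ≤ h * (∑ i, ∑ j, M⁻¹ i j).re := by
  have hs := coercive_mul_re_star_dotProduct_le hh hM
  have hsq := re_dotProduct_self_le (M⁻¹ *ᵥ 1)
  rw [sum_sum_mul_self_of_transpose_eq (by rw [transpose_nonsing_inv, hMt]),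
    sum_sum_eq_one_dotProduct_mulVec_one]
  nlinarith

end Coercive

end Matrix

theorem averaged_inequalities_general (N : ℕ)
    (L : Matrix (Fin N) (Fin N) ℝ) (hLpsd : L.PosSemidef)
    (h : ℝ) (hh : 0 < h) (α : Fin N → ℝ) :
    (((h : ℂ) / (N : ℂ)) * ∑ i, ∑ j,
        (L.map (fun x => (x : ℂ)) + (h : ℂ) • 1
          + Complex.I • Matrix.diagonal (fun i => (α i : ℂ)))⁻¹ i j).re ≤ 1
    ∧ (((h : ℂ) ^ 2 / (N : ℂ)) * ∑ i, ∑ j,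
        (((L.map (fun x => (x : ℂ)) + (h : ℂ) • 1
            + Complex.I • Matrix.diagonal (fun i => (α i : ℂ)))⁻¹
          * (L.map (fun x => (x : ℂ)) + (h : ℂ) • 1
            + Complex.I • Matrix.diagonal (fun i => (α i : ℂ)))⁻¹) i j)).re
      ≤ (((h : ℂ) / (N : ℂ)) * ∑ i, ∑ j,
        (L.map (fun x => (x : ℂ)) + (h : ℂ) • 1
          + Complex.I • Matrix.diagonal (fun i => (α i : ℂ)))⁻¹ i j).re := by
  have hM := hLpsd.coercive_map_ofReal_add_smul_one_add_I_smul_diagonal h α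
  have hMt := transpose_map_ofReal_add_smul_one_add_I_smul_diagonal
    (isHermitian_iff_isSymm.mp hLpsd.isHermitian) h α
  have hN : (0 : ℝ) ≤ N := Nat.cast_nonneg N
  simp only [← Complex.ofReal_natCast, ← Complex.ofReal_pow, ← Complex.ofReal_div,
    Complex.re_ofReal_mul, div_mul_eq_mul_div]
  constructor
  · exact div_le_one_of_le₀ (by simpa using mul_re_sum_inv_le_card hh hM) hN
  · exact div_le_div_of_nonneg_right (sq_mul_re_sum_inv_mul_inv_le hh hM hMt) hN

/-- `1 ≥ Re((h/N) Σᵢⱼ (L+hI+iα)⁻¹ᵢⱼ) ≥ Re((h²/N) Σᵢⱼ (L+hI+iα)⁻²ᵢⱼ)`. -/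
theorem averaged_inequalities (N : ℕ) (hN : 0 < N)
    (L : Matrix (Fin N) (Fin N) ℝ) (hLsymm : L.IsSymm) (hLpsd : L.PosSemidef)
    (h : ℝ) (hh : 0 < h) (α : Fin N → ℝ) :
    (((h : ℂ) / (N : ℂ)) * ∑ i, ∑ j,
        (L.map (fun x => (x : ℂ)) + (h : ℂ) • 1
          + Complex.I • Matrix.diagonal (fun i => (α i : ℂ)))⁻¹ i j).re ≤ 1
    ∧ (((h : ℂ) ^ 2 / (N : ℂ)) * ∑ i, ∑ j,
        (((L.map (fun x => (x : ℂ)) + (h : ℂ) • 1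
            + Complex.I • Matrix.diagonal (fun i => (α i : ℂ)))⁻¹
          * (L.map (fun x => (x : ℂ)) + (h : ℂ) • 1
            + Complex.I • Matrix.diagonal (fun i => (α i : ℂ)))⁻¹) i j)).re
      ≤ (((h : ℂ) / (N : ℂ)) * ∑ i, ∑ j,
        (L.map (fun x => (x : ℂ)) + (h : ℂ) • 1
          + Complex.I • Matrix.diagonal (fun i => (α i : ℂ)))⁻¹ i j).re :=
  averaged_inequalities_general N L hLpsd h hh α
end

section
/- One has 0 ≤ (1/N) Σ_{i,k,j=1}^N α_i (L + hI − iα)^{-1}_{ik} (L + hI + iα)^{-1}_{kj} α_j ≤ Re( (1/(Nh)) Σ_{i,j=1}^N α_i (L + hI + iα)^{-1}_{ij} α_j ); in particular the left-hand sum is a nonnegative real number. -/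
/-!
Write `P = L + hI + iα`. Since `L` and `α` are real symmetric, `L + hI - iα = Pᴴ`, so with
`x = P⁻¹ α` the triple sum is `αᵀ (P⁻¹)ᴴ P⁻¹ α = ‖x‖²`, while the double sum `αᵀ x = (P x)ᴴ x` is
the conjugate of `xᴴ P x`, whose real part is `xᴴ L x + h ‖x‖² ≥ h ‖x‖²`.
-/

open Matrix
open scoped MatrixOrder ComplexOrder

namespace Matrix

section Sums
variable {l m n R : Type*} [Fintype l] [Fintype m] [Fintype n] [CommSemiring R]

theorem sum_sum_mul_eq_dotProduct_mulVec (a : m → R) (M : Matrix m n R) (b : n → R) :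
    ∑ i, ∑ j, a i * M i j * b j = a ⬝ᵥ (M *ᵥ b) := by
  simp [dotProduct, mulVec, Finset.mul_sum, mul_assoc]

theorem sum_sum_sum_mul_eq_dotProduct_mulVec (a : l → R) (M : Matrix l m R) (N : Matrix m n R)
    (b : n → R) : ∑ i, ∑ k, ∑ j, a i * M i k * N k j * b j = a ⬝ᵥ ((M * N) *ᵥ b) := by
  rw [← mulVec_mulVec]
  simp [dotProduct, mulVec, Finset.mul_sum, mul_assoc]

theorem dotProduct_conjTranspose_mul_mulVec_of_star_eq [StarRing R] {a : n → R} (ha : star a = a)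
    (M : Matrix m n R) : a ⬝ᵥ ((Mᴴ * M) *ᵥ a) = star (M *ᵥ a) ⬝ᵥ (M *ᵥ a) := by
  rw [← mulVec_mulVec, dotProduct_mulVec, vecMul_conjTranspose, ha]

end Sums

variable {n : Type*} [DecidableEq n]

theorem conjTranspose_add_smul_one_add_I_smul {A B : Matrix n n ℂ} (hA : A.IsHermitian)
    (hB : B.IsHermitian) (h : ℝ) :
    (A + (h : ℂ) • 1 + Complex.I • B)ᴴ = A + (h : ℂ) • 1 - Complex.I • B := by
  simp [conjTranspose_add, conjTranspose_smul, hA.eq, hB.eq, sub_eq_add_neg]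

variable [Fintype n]

theorem PosSemidef.map_ofReal {L : Matrix n n ℝ} (hL : L.PosSemidef) :
    (L.map ((↑) : ℝ → ℂ)).PosSemidef := by
  obtain ⟨B, rfl⟩ := CStarAlgebra.nonneg_iff_eq_star_mul_self.mp hL.nonneg
  have : (star B * B).map ((↑) : ℝ → ℂ) = (B.map (↑))ᴴ * B.map (↑) := by
    rw [star_eq_conjTranspose, show ((↑) : ℝ → ℂ) = Complex.ofRealHom from rfl, Matrix.map_mul]
    congr 1
    ext i j
    simp
  rw [this]
  exact posSemidef_conjTranspose_mul_self _

section Accretive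
variable {A B : Matrix n n ℂ}

theorem mul_re_le_re_dotProduct_mulVec_add_smul_one_add_I_smul (hA : A.PosSemidef)
    (hB : B.IsHermitian) (h : ℝ) (x : n → ℂ) :
    h * (star x ⬝ᵥ x).re ≤ (star x ⬝ᵥ ((A + (h : ℂ) • 1 + Complex.I • B) *ᵥ x)).re := by
  have hAx := (Complex.nonneg_iff.1 (hA.dotProduct_mulVec_nonneg x)).1
  have hBx : (star x ⬝ᵥ (B *ᵥ x)).im = 0 := hB.im_star_dotProduct_mulVec_self x
  simp only [add_mulVec, smul_mulVec, one_mulVec, dotProduct_add, dotProduct_smul, smul_eq_mul,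
    Complex.add_re, Complex.re_ofReal_mul, Complex.I_mul_re, hBx]
  linarith

variable {P : Matrix n n ℂ} {h : ℝ}

theorem isUnit_of_forall_mul_re_le (hh : 0 < h)
    (hP : ∀ x, h * (star x ⬝ᵥ x).re ≤ (star x ⬝ᵥ (P *ᵥ x)).re) : IsUnit P := by
  rw [isUnit_iff_isUnit_det, isUnit_iff_ne_zero, Ne, ← exists_mulVec_eq_zero_iff]
  rintro ⟨x, hx0, hPx⟩
  have hre : (star x ⬝ᵥ x).re ≤ 0 := by
    have := hP x
    rw [hPx, dotProduct_zero, Complex.zero_re] at this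
    exact nonpos_of_mul_nonpos_right this hh
  have hnonneg := dotProduct_star_self_nonneg x
  refine hx0 (dotProduct_star_self_eq_zero.mp (le_antisymm ?_ hnonneg))
  exact Complex.le_def.2 ⟨hre, (Complex.nonneg_iff.1 hnonneg).2.symm⟩

theorem mul_re_dotProduct_le_re_dotProduct_inv_mulVec (hh : 0 < h)
    (hP : ∀ x, h * (star x ⬝ᵥ x).re ≤ (star x ⬝ᵥ (P *ᵥ x)).re) {a : n → ℂ} (ha : star a = a) :
    h * (a ⬝ᵥ ((Pᴴ⁻¹ * P⁻¹) *ᵥ a)).re ≤ (a ⬝ᵥ (P⁻¹ *ᵥ a)).re := by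
  set x := P⁻¹ *ᵥ a
  have hax : a = P *ᵥ x := by
    rw [mulVec_mulVec, mul_nonsing_inv _ ((isUnit_iff_isUnit_det P).mp
      (isUnit_of_forall_mul_re_le hh hP)), one_mulVec]
  rw [← conjTranspose_nonsing_inv, dotProduct_conjTranspose_mul_mulVec_of_star_eq ha]
  calc h * (star x ⬝ᵥ x).re ≤ (star x ⬝ᵥ (P *ᵥ x)).re := hP x
    _ = (a ⬝ᵥ x).re := by
      conv_rhs => rw [← ha, hax, star_dotProduct]
      simp

end Accretive

end Matrix

theorem alpha_triple_sum_inequality_general (N : ℕ)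
    (L : Matrix (Fin N) (Fin N) ℝ) (hLpsd : L.PosSemidef)
    (h : ℝ) (hh : 0 < h) (α : Fin N → ℝ) :
    ((1 / (N : ℂ)) * ∑ i, ∑ k, ∑ j, (α i : ℂ) *
        ((L.map (fun x => (x : ℂ)) + (h : ℂ) • 1
            - Complex.I • Matrix.diagonal (fun i => (α i : ℂ)))⁻¹ i k) *
        ((L.map (fun x => (x : ℂ)) + (h : ℂ) • 1
            + Complex.I • Matrix.diagonal (fun i => (α i : ℂ)))⁻¹ k j) * (α j : ℂ)).im = 0
    ∧ 0 ≤ ((1 / (N : ℂ)) * ∑ i, ∑ k, ∑ j, (α i : ℂ) *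
        ((L.map (fun x => (x : ℂ)) + (h : ℂ) • 1
            - Complex.I • Matrix.diagonal (fun i => (α i : ℂ)))⁻¹ i k) *
        ((L.map (fun x => (x : ℂ)) + (h : ℂ) • 1
            + Complex.I • Matrix.diagonal (fun i => (α i : ℂ)))⁻¹ k j) * (α j : ℂ)).re
    ∧ ((1 / (N : ℂ)) * ∑ i, ∑ k, ∑ j, (α i : ℂ) *
        ((L.map (fun x => (x : ℂ)) + (h : ℂ) • 1
            - Complex.I • Matrix.diagonal (fun i => (α i : ℂ)))⁻¹ i k) *
        ((L.map (fun x => (x : ℂ)) + (h : ℂ) • 1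
            + Complex.I • Matrix.diagonal (fun i => (α i : ℂ)))⁻¹ k j) * (α j : ℂ)).re
      ≤ ((1 / ((N : ℂ) * (h : ℂ))) * ∑ i, ∑ j, (α i : ℂ) *
        ((L.map (fun x => (x : ℂ)) + (h : ℂ) • 1
            + Complex.I • Matrix.diagonal (fun i => (α i : ℂ)))⁻¹ i j) * (α j : ℂ)).re := by
  set A := L.map (fun x => (x : ℂ))
  set D := diagonal fun i => (α i : ℂ)
  set a : Fin N → ℂ := fun i => (α i : ℂ)
  have hA : A.PosSemidef := hLpsd.map_ofReal
  have hD : D.IsHermitian := isHermitian_diagonal_of_self_adjoint _ (by ext; simp)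
  have ha : star a = a := by ext; simp [a]
  rw [← conjTranspose_add_smul_one_add_I_smul hA.isHermitian hD,
    sum_sum_sum_mul_eq_dotProduct_mulVec, sum_sum_mul_eq_dotProduct_mulVec]
  set P := A + (h : ℂ) • 1 + Complex.I • D
  have hP := mul_re_le_re_dotProduct_mulVec_add_smul_one_add_I_smul hA hD h
  have hnonneg : 0 ≤ a ⬝ᵥ ((Pᴴ⁻¹ * P⁻¹) *ᵥ a) := by
    rw [← conjTranspose_nonsing_inv, dotProduct_conjTranspose_mul_mulVec_of_star_eq ha]
    exact dotProduct_star_self_nonneg _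
  have hle := mul_re_dotProduct_le_re_dotProduct_inv_mulVec hh hP ha
  generalize a ⬝ᵥ ((Pᴴ⁻¹ * P⁻¹) *ᵥ a) = z at hnonneg hle ⊢
  generalize a ⬝ᵥ (P⁻¹ *ᵥ a) = w at hle ⊢
  obtain ⟨hz, hzim⟩ := Complex.nonneg_iff.1 hnonneg
  have hNinv : 1 / (N : ℂ) = ((1 / N : ℝ) : ℂ) := by push_cast; rfl
  have hNhinv : 1 / ((N : ℂ) * h) = ((1 / (N * h) : ℝ) : ℂ) := by push_cast; rfl
  rw [hNinv, hNhinv, Complex.im_ofReal_mul, Complex.re_ofReal_mul, Complex.re_ofReal_mul, ← hzim]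
  refine ⟨mul_zero _, mul_nonneg (by positivity) hz, ?_⟩
  calc 1 / N * z.re = 1 / (N * h) * (h * z.re) := by field_simp
    _ ≤ 1 / (N * h) * w.re := by gcongr

/-- `0 ≤ (1/N) Σᵢₖⱼ αᵢ (L+hI−iα)⁻¹ᵢₖ (L+hI+iα)⁻¹ₖⱼ αⱼ
      ≤ Re((1/(Nh)) Σᵢⱼ αᵢ (L+hI+iα)⁻¹ᵢⱼ αⱼ)`,
and in particular the left-hand sum is a nonnegative real number. -/
theorem alpha_triple_sum_inequality (N : ℕ) (hN : 0 < N)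
    (L : Matrix (Fin N) (Fin N) ℝ) (hLsymm : L.IsSymm) (hLpsd : L.PosSemidef)
    (h : ℝ) (hh : 0 < h) (α : Fin N → ℝ) :
    ((1 / (N : ℂ)) * ∑ i, ∑ k, ∑ j, (α i : ℂ) *
        ((L.map (fun x => (x : ℂ)) + (h : ℂ) • 1
            - Complex.I • Matrix.diagonal (fun i => (α i : ℂ)))⁻¹ i k) *
        ((L.map (fun x => (x : ℂ)) + (h : ℂ) • 1
            + Complex.I • Matrix.diagonal (fun i => (α i : ℂ)))⁻¹ k j) * (α j : ℂ)).im = 0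
    ∧ 0 ≤ ((1 / (N : ℂ)) * ∑ i, ∑ k, ∑ j, (α i : ℂ) *
        ((L.map (fun x => (x : ℂ)) + (h : ℂ) • 1
            - Complex.I • Matrix.diagonal (fun i => (α i : ℂ)))⁻¹ i k) *
        ((L.map (fun x => (x : ℂ)) + (h : ℂ) • 1
            + Complex.I • Matrix.diagonal (fun i => (α i : ℂ)))⁻¹ k j) * (α j : ℂ)).re
    ∧ ((1 / (N : ℂ)) * ∑ i, ∑ k, ∑ j, (α i : ℂ) *
        ((L.map (fun x => (x : ℂ)) + (h : ℂ) • 1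
            - Complex.I • Matrix.diagonal (fun i => (α i : ℂ)))⁻¹ i k) *
        ((L.map (fun x => (x : ℂ)) + (h : ℂ) • 1
            + Complex.I • Matrix.diagonal (fun i => (α i : ℂ)))⁻¹ k j) * (α j : ℂ)).re
      ≤ ((1 / ((N : ℂ) * (h : ℂ))) * ∑ i, ∑ j, (α i : ℂ) *
        ((L.map (fun x => (x : ℂ)) + (h : ℂ) • 1
            + Complex.I • Matrix.diagonal (fun i => (α i : ℂ)))⁻¹ i j) * (α j : ℂ)).re :=
  alpha_triple_sum_inequality_general N L hLpsd h hh α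
end

section
/- For every index k ∈ {1,…,N} one has | Im( (L + hI + iα)^{-1}_{kk} ) | ≤ (1/2) (L + hI)^{-1}_{kk}. -/
/-!
Put `A = L + hI`, `B = A + iα` and let `x` be the `k`-th column of `B⁻¹`, so that
`z = B⁻¹ₖₖ = xₖ`. Then `conj z = x* B x`, and since `x* α x` is real, `Re z = x* A x`.
Cauchy–Schwarz for the inner product `⟨u, v⟩ = u* A v`, applied to `x` and `y = A⁻¹ eₖ`, gives
`|z|² = |x* A y|² ≤ (x* A x) (y* A y) = Re z · A⁻¹ₖₖ`. So `z` lies in the closed disc with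
diameter `[0, A⁻¹ₖₖ]`, whence `|Im z| ≤ A⁻¹ₖₖ / 2`.
-/

open Matrix ComplexOrder

namespace Matrix

variable {n : Type*} [Fintype n]

theorem map_nonsing_inv [DecidableEq n] {K L : Type*} [Field K] [Field L] (f : K →+* L)
    (A : Matrix n n K) : A⁻¹.map f = (A.map f)⁻¹ := by
  rw [inv_def, inv_def, Ring.inverse_eq_inv', Ring.inverse_eq_inv', ← f.mapMatrix_apply,
    ← f.mapMatrix_apply, ← f.map_adjugate, ← f.map_det, ← map_inv₀ f]
  ext i j
  simp

theorem PosSemidef.map_ofReal_s11 [DecidableEq n] {A : Matrix n n ℝ} (hA : A.PosSemidef) :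
    (A.map ((↑) : ℝ → ℂ)).PosSemidef := by
  open scoped MatrixOrder in
  obtain ⟨B, rfl⟩ := CStarAlgebra.nonneg_iff_eq_star_mul_self.mp hA.nonneg
  change ((star B * B).map Complex.ofRealHom).PosSemidef
  rw [Matrix.map_mul, star_eq_conjTranspose, conjTranspose_map _ fun _ => by simp]
  exact posSemidef_conjTranspose_mul_self _

theorem PosDef.map_ofReal_s11 [DecidableEq n] {A : Matrix n n ℝ} (hA : A.PosDef) :
    (A.map ((↑) : ℝ → ℂ)).PosDef :=
  hA.posSemidef.map_ofReal_s11.posDef_iff_isUnit.mpr (hA.isUnit.map Complex.ofRealHom.mapMatrix)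

theorem PosSemidef.norm_dotProduct_mulVec_sq_le {𝕜 : Type*} [RCLike 𝕜] {M : Matrix n n 𝕜}
    (hM : M.PosSemidef) (x y : n → 𝕜) :
    ‖star x ⬝ᵥ (M *ᵥ y)‖ ^ 2 ≤
      RCLike.re (star x ⬝ᵥ (M *ᵥ x)) * RCLike.re (star y ⬝ᵥ (M *ᵥ y)) := by
  let := M.toSeminormedAddCommGroup hM
  let := M.toInnerProductSpace hM
  have cs := inner_mul_inner_self_le (𝕜 := 𝕜) x y
  rw [norm_inner_symm y x] at cs
  rw [sq, dotProduct_comm (star x), dotProduct_comm (star x), dotProduct_comm (star y)]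
  exact cs

section HermitianPart

variable {A D : Matrix n n ℂ}

theorem IsHermitian.re_star_dotProduct_add_I_smul_mulVec (hD : D.IsHermitian) (x : n → ℂ) :
    (star x ⬝ᵥ ((A + Complex.I • D) *ᵥ x)).re = (star x ⬝ᵥ (A *ᵥ x)).re := by
  have hreal := hD.im_star_dotProduct_mulVec_self x
  rw [RCLike.im_to_complex] at hreal
  simp [add_mulVec, smul_mulVec, dotProduct_add, dotProduct_smul, hreal]

variable [DecidableEq n]

theorem PosDef.isUnit_add_I_smul (hA : A.PosDef) (hD : D.IsHermitian) :
    IsUnit (A + Complex.I • D) := by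
  rw [isUnit_iff_isUnit_det, isUnit_iff_ne_zero]
  intro hdet
  obtain ⟨x, hx, hBx⟩ := exists_mulVec_eq_zero_iff.mpr hdet
  have hpos := hA.re_dotProduct_pos hx
  rw [RCLike.re_to_complex, ← hD.re_star_dotProduct_add_I_smul_mulVec, hBx] at hpos
  simp at hpos

theorem PosDef.normSq_inv_add_I_smul_apply_le (hA : A.PosDef) (hD : D.IsHermitian) (k : n) :
    Complex.normSq ((A + Complex.I • D)⁻¹ k k) ≤
      ((A + Complex.I • D)⁻¹ k k).re * (A⁻¹ k k).re := by
  set B := A + Complex.I • D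
  have hB : IsUnit B.det := (isUnit_iff_isUnit_det _).mp (hA.isUnit_add_I_smul hD)
  set e : n → ℂ := Pi.single k 1
  set x := B⁻¹ *ᵥ e
  set y := A⁻¹ *ᵥ e
  have hBx : B *ᵥ x = e := by rw [mulVec_mulVec, mul_nonsing_inv _ hB, one_mulVec]
  have hAy : A *ᵥ y = e := by
    rw [mulVec_mulVec, mul_nonsing_inv _ ((isUnit_iff_isUnit_det _).mp hA.isUnit), one_mulVec]
  have he (v : n → ℂ) : star v ⬝ᵥ e = star (v k) := by simp [e]
  have hre : (star x ⬝ᵥ (A *ᵥ x)).re = (B⁻¹ k k).re := by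
    rw [← hD.re_star_dotProduct_add_I_smul_mulVec, hBx, he]
    simp [x, e]
  have cs := hA.posSemidef.norm_dotProduct_mulVec_sq_le x y
  rw [hAy, he, he, RCLike.re_to_complex, RCLike.re_to_complex, hre] at cs
  simpa [x, y, e, Complex.normSq_eq_norm_sq] using cs

end HermitianPart

end Matrix

theorem Complex.abs_im_le_half_of_normSq_le_re_mul {z : ℂ} {c : ℝ} (hc : 0 ≤ c)
    (h : Complex.normSq z ≤ z.re * c) : |z.im| ≤ c / 2 := by
  rw [Complex.normSq_apply] at h
  exact abs_le_of_sq_le_sq (by nlinarith [sq_nonneg (z.re - c / 2)]) (by positivity)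

theorem diagonal_imaginary_part_bound_general (N : ℕ)
    (L : Matrix (Fin N) (Fin N) ℝ) (hLpsd : L.PosSemidef)
    (h : ℝ) (hh : 0 < h) (α : Fin N → ℝ) (k : Fin N) :
    |((L.map (fun x => (x : ℂ)) + (h : ℂ) • 1
        + Complex.I • Matrix.diagonal (fun i => (α i : ℂ)))⁻¹ k k).im|
      ≤ (1 / 2) * (L + h • (1 : Matrix (Fin N) (Fin N) ℝ))⁻¹ k k := by
  set A := L + h • (1 : Matrix (Fin N) (Fin N) ℝ)
  have hA : A.PosDef := PosDef.posSemidef_add hLpsd (PosDef.one.smul hh)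
  have hAℂ : L.map (fun x => (x : ℂ)) + (h : ℂ) • 1 = A.map (↑) := by
    simp [A, Matrix.map_add, Matrix.map_smul]
  have hinv : (A.map ((↑) : ℝ → ℂ))⁻¹ = A⁻¹.map (↑) := (map_nonsing_inv Complex.ofRealHom A).symm
  have hD : (diagonal fun i => (α i : ℂ)).IsHermitian :=
    isHermitian_diagonal_of_self_adjoint _ (by ext; simp)
  have key := hA.map_ofReal_s11.normSq_inv_add_I_smul_apply_le hD k
  rw [hinv, map_apply, Complex.ofReal_re] at key
  rw [one_div_mul_eq_div, hAℂ]
  exact Complex.abs_im_le_half_of_normSq_le_re_mul hA.inv.diag_pos.le key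

/-- For every `k`, `|Im((L+hI+iα)⁻¹ₖₖ)| ≤ (1/2)(L+hI)⁻¹ₖₖ`. -/
theorem diagonal_imaginary_part_bound (N : ℕ) (hN : 0 < N)
    (L : Matrix (Fin N) (Fin N) ℝ) (hLsymm : L.IsSymm) (hLpsd : L.PosSemidef)
    (h : ℝ) (hh : 0 < h) (α : Fin N → ℝ) (k : Fin N) :
    |((L.map (fun x => (x : ℂ)) + (h : ℂ) • 1
        + Complex.I • Matrix.diagonal (fun i => (α i : ℂ)))⁻¹ k k).im|
      ≤ (1 / 2) * (L + h • (1 : Matrix (Fin N) (Fin N) ℝ))⁻¹ k k :=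
  diagonal_imaginary_part_bound_general N L hLpsd h hh α k
end
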